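/- arXiv:2408.07575 — 2 statements merged into one kernel-verified Lean document; each statement's English description precedes it below -/
import Mathlib

section
/- Minimally Markovian implies sparsest Markov for maximal ancestral graphs (Proposition 10, implication 1 ⇒ 2): For every independence model P and every maximal ancestral graph (MAG) G on V, if P is minimally Markovian to G, then G is a sparsest Markov graph of P within MAGs on V. -/
/-- A mixed graph on vertex type `V`, with directed (`dir`), undirected (`undir`)
and bidirected (`bidir`) edges, no self-loops, and at most one edge between any
two nodes. -/
structure MixedGraph (V : Type) where
  dir : V → V → Prop
  undir : V → V → Prop
  bidir : V → V → Prop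
  undir_symm : ∀ i j, undir i j → undir j i
  bidir_symm : ∀ i j, bidir i j → bidir j i
  dir_irrefl : ∀ i, ¬ dir i i
  undir_irrefl : ∀ i, ¬ undir i i
  bidir_irrefl : ∀ i, ¬ bidir i i
  not_dir_dir : ∀ i j, dir i j → ¬ dir j i
  not_dir_undir : ∀ i j, dir i j → ¬ undir i j
  not_dir_bidir : ∀ i j, dir i j → ¬ bidir i j
  not_undir_bidir : ∀ i j, undir i j → ¬ bidir i j

namespace MixedGraph

variable {V : Type}

/-- `i` and `j` are adjacent in `G`. -/
def adj (G : MixedGraph V) (i j : V) : Prop :=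
  G.dir i j ∨ G.dir j i ∨ G.undir i j ∨ G.bidir i j

/-- The edge between `a` and `b` has an arrowhead at `b`. -/
def arrowAt (G : MixedGraph V) (a b : V) : Prop := G.dir a b ∨ G.bidir a b

/-- `G` is an ancestral graph: no arrowhead points at a node with an undirected
edge, no directed path from `i` to `j` together with `i ↔ j`, and no directed
cycles. -/
def Ancestral (G : MixedGraph V) : Prop :=
  (∀ i j k, G.undir i j → ¬ G.arrowAt k j) ∧
  (∀ i j, Relation.TransGen G.dir i j → ¬ G.bidir i j) ∧
  (∀ i, ¬ Relation.TransGen G.dir i i)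

/-- An m-connecting walk from `i` to `j` given `C`: consecutive nodes are
adjacent, and an interior node is a collider on the walk (arrowheads at it from
both sides) if and only if it lies in `C`. -/
def ConnWalk (G : MixedGraph V) (i j : V) (C : Set V) : Prop :=
  ∃ (n : ℕ) (w : ℕ → V), w 0 = i ∧ w n = j ∧
    (∀ m, m < n → G.adj (w m) (w (m + 1))) ∧
    (∀ m, 0 < m → m < n →
      ((G.arrowAt (w (m - 1)) (w m) ∧ G.arrowAt (w (m + 1)) (w m)) ↔ w m ∈ C))

/-- m-separation of `A` and `B` given `C` in `G`. -/
def msep (G : MixedGraph V) (A B C : Set V) : Prop :=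
  ∀ i ∈ A, ∀ j ∈ B, ¬ G.ConnWalk i j C

end MixedGraph

/-- The components of the triple `t` are pairwise disjoint. -/
def DisjTriple {V : Type} (t : Set V × Set V × Set V) : Prop :=
  Disjoint t.1 t.2.1 ∧ Disjoint t.1 t.2.2 ∧ Disjoint t.2.1 t.2.2

/-- The independence model `J(G)` of a mixed graph `G`: all triples `(A, B, C)`
of pairwise disjoint sets with `A ⊥_G B | C`.  Two graphs are Markov equivalent
iff their independence models are equal. -/
def MixedGraph.J {V : Type} (G : MixedGraph V) : Set (Set V × Set V × Set V) :=
  {t | DisjTriple t ∧ G.msep t.1 t.2.1 t.2.2}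

/-- An ancestral graph is maximal if every pair of distinct non-adjacent nodes
has a separating set. -/
def MixedGraph.MaximalAG {V : Type} (G : MixedGraph V) : Prop :=
  ∀ i j : V, i ≠ j → ¬ G.adj i j →
    ∃ C : Set V, i ∉ C ∧ j ∉ C ∧ G.msep {i} {j} C

/-- `G` is a maximal ancestral graph (MAG). -/
def MixedGraph.IsMAG {V : Type} (G : MixedGraph V) : Prop :=
  G.Ancestral ∧ G.MaximalAG

/-- Adjacency in the skeleton `sk(P)` of an independence model `P`: distinct
`i, j` are adjacent iff there is no `C ⊆ V ∖ {i,j}` with `i ⊥⊥ j | C` in `P`. -/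
def skP {V : Type} (P : Set (Set V × Set V × Set V)) (i j : V) : Prop :=
  i ≠ j ∧ ¬ ∃ C : Set V, i ∉ C ∧ j ∉ C ∧ (({i} : Set V), ({j} : Set V), C) ∈ P

/-- `P` is Markovian to `G`: `J(G) ⊆ J(P)`. -/
def MarkovTo {V : Type} (P : Set (Set V × Set V × Set V)) (G : MixedGraph V) : Prop :=
  MixedGraph.J G ⊆ P

/-- `P` is minimally Markovian to `G`: `P` is Markovian to `G` and `sk(P) = sk(G)`. -/
def MinMarkov {V : Type} (P : Set (Set V × Set V × Set V)) (G : MixedGraph V) : Prop :=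
  MarkovTo P G ∧ ∀ i j, skP P i j ↔ G.adj i j

/-- The number of edges of a mixed graph, counted as unordered pairs. -/
noncomputable def MixedGraph.edgeCard {V : Type} (G : MixedGraph V) : ℕ :=
  Set.ncard {e : Sym2 V | ∃ i j, e = s(i, j) ∧ G.adj i j}

/-- `G` is a sparsest Markov graph of `P` within MAGs on `V`. -/
def SparsestMarkovMAG {V : Type} (P : Set (Set V × Set V × Set V))
    (G : MixedGraph V) : Prop :=
  MarkovTo P G ∧
    ∀ G' : MixedGraph V, G'.IsMAG → MarkovTo P G' → G.edgeCard ≤ G'.edgeCard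

/-- `P` is Pearl-minimal to `G` within MAGs on `V`: `P` is Markovian to `G` and
there is no MAG `G'` with `J(G) ⊊ J(G') ⊆ J(P)`. -/
def PearlMinimalMAG {V : Type} (P : Set (Set V × Set V × Set V))
    (G : MixedGraph V) : Prop :=
  MarkovTo P G ∧
    ¬ ∃ G' : MixedGraph V, G'.IsMAG ∧ MixedGraph.J G ⊂ MixedGraph.J G' ∧
      MixedGraph.J G' ⊆ P

/-- `G'` is a subgraph of the mixed graph `G`: every edge of `G'` is an edge of
`G` of the same type. -/
def MixedGraph.Subgraph {V : Type} (G' G : MixedGraph V) : Prop :=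
  (∀ i j, G'.dir i j → G.dir i j) ∧ (∀ i j, G'.undir i j → G.undir i j) ∧
    (∀ i j, G'.bidir i j → G.bidir i j)

/-- `G'` is a proper subgraph of the mixed graph `G`. -/
def MixedGraph.ProperSubgraph {V : Type} (G' G : MixedGraph V) : Prop :=
  MixedGraph.Subgraph G' G ∧
    (G'.dir ≠ G.dir ∨ G'.undir ≠ G.undir ∨ G'.bidir ≠ G.bidir)

/-- `P` is causally minimal to `G` within MAGs on `V`: `P` is Markovian to `G`
and not Markovian to any proper subgraph of `G` that is a MAG. -/
def CausallyMinimalMAG {V : Type} (P : Set (Set V × Set V × Set V))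
    (G : MixedGraph V) : Prop :=
  MarkovTo P G ∧
    ¬ ∃ G' : MixedGraph V, G'.IsMAG ∧ MixedGraph.ProperSubgraph G' G ∧
      MarkovTo P G'

/-- Minimally Markovian implies sparsest Markov for maximal ancestral graphs
(Proposition 10, implication 1 ⇒ 2). -/
theorem minMarkov_implies_sparsest_MAG {V : Type} [Fintype V]
    (P : Set (Set V × Set V × Set V)) (hP : ∀ t ∈ P, DisjTriple t)
    (G : MixedGraph V) (hG : G.IsMAG)
    (h : MinMarkov P G) : SparsestMarkovMAG P G := by
  obtain ⟨hM, hsk⟩ := h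
  refine ⟨hM, fun G' hG' hM' => ?_⟩
  have hsub : ∀ i j, G.adj i j → G'.adj i j := by
    intro i j hadj
    by_contra hnadj
    have hne : i ≠ j := by
      intro h'; subst h'
      rcases hadj with h | h | h | h
      exacts [G.dir_irrefl i h, G.dir_irrefl i h, G.undir_irrefl i h, G.bidir_irrefl i h]
    obtain ⟨C, hiC, hjC, hmsep⟩ := hG'.2 i j hne hnadj
    have hmem : (({i} : Set V), ({j} : Set V), C) ∈ MixedGraph.J G' := by
      refine ⟨⟨?_, ?_, ?_⟩, hmsep⟩ <;>
        simp [Set.disjoint_singleton_left, hne, hiC, hjC]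
    have hP' := hM' hmem
    have hskP : skP P i j := (hsk i j).mpr hadj
    exact hskP.2 ⟨C, hiC, hjC, hP'⟩
  have hset : {e : Sym2 V | ∃ i j, e = s(i, j) ∧ G.adj i j} ⊆
      {e : Sym2 V | ∃ i j, e = s(i, j) ∧ G'.adj i j} := by
    rintro e ⟨i, j, rfl, hadj⟩
    exact ⟨i, j, rfl, hsub _ _ hadj⟩
  exact Set.ncard_le_ncard hset (Set.toFinite _)
end

section
/- Pearl-minimal implies causally minimal for maximal ancestral graphs (Proposition 10, implication 3 ⇒ 4): For every independence model P and every maximal ancestral graph (MAG) G on V, if P is Pearl-minimal to G within MAGs on V, then P is causally minimal to G within MAGs on V, i.e. P is Markovian to G and P is not Markovian to any proper subgraph of G that is a MAG on V. -/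
namespace MixedGraph

lemma adj_symm' {V : Type} (G : MixedGraph V) {i j : V} (h : G.adj i j) : G.adj j i := by
  rcases h with h | h | h | h
  · exact Or.inr (Or.inl h)
  · exact Or.inl h
  · exact Or.inr (Or.inr (Or.inl (G.undir_symm _ _ h)))
  · exact Or.inr (Or.inr (Or.inr (G.bidir_symm _ _ h)))

lemma subgraph_adj {V : Type} {G' G : MixedGraph V} (hs : G'.Subgraph G) {i j : V}
    (h : G'.adj i j) : G.adj i j := by
  rcases h with h | h | h | h
  · exact Or.inl (hs.1 _ _ h)
  · exact Or.inr (Or.inl (hs.1 _ _ h))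
  · exact Or.inr (Or.inr (Or.inl (hs.2.1 _ _ h)))
  · exact Or.inr (Or.inr (Or.inr (hs.2.2 _ _ h)))

lemma arrow_transfer {V : Type} {G' G : MixedGraph V} (hs : G'.Subgraph G) {a b : V}
    (h : G'.adj a b) : G.arrowAt a b ↔ G'.arrowAt a b := by
  constructor
  · intro hA
    rcases h with h | h | h | h
    · exact Or.inl h
    · exfalso
      rcases hA with hA | hA
      · exact G.not_dir_dir _ _ (hs.1 _ _ h) hA
      · exact G.not_dir_bidir _ _ (hs.1 _ _ h) (G.bidir_symm _ _ hA)
    · exfalso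
      rcases hA with hA | hA
      · exact G.not_dir_undir _ _ hA (hs.2.1 _ _ h)
      · exact G.not_undir_bidir _ _ (hs.2.1 _ _ h) hA
    · exact Or.inr h
  · intro hA
    rcases hA with h' | h'
    · exact Or.inl (hs.1 _ _ h')
    · exact Or.inr (hs.2.2 _ _ h')

lemma connWalk_mono {V : Type} {G' G : MixedGraph V} (hs : G'.Subgraph G) {i j : V}
    {C : Set V} (h : G'.ConnWalk i j C) : G.ConnWalk i j C := by
  obtain ⟨n, w, h0, hn, hadj, hcol⟩ := h
  refine ⟨n, w, h0, hn, fun m hm => subgraph_adj hs (hadj m hm), fun m hm0 hmn => ?_⟩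
  have ha1 : G'.adj (w (m - 1)) (w m) := by
    have := hadj (m - 1) (by omega)
    have he : m - 1 + 1 = m := by omega
    rwa [he] at this
  have ha2 : G'.adj (w (m + 1)) (w m) := G'.adj_symm' (hadj m hmn)
  rw [arrow_transfer hs ha1, arrow_transfer hs ha2]
  exact hcol m hm0 hmn

lemma msep_mono {V : Type} {G' G : MixedGraph V} (hs : G'.Subgraph G) {A B C : Set V}
    (h : G.msep A B C) : G'.msep A B C :=
  fun i hi j hj hw => h i hi j hj (connWalk_mono hs hw)

lemma adj_not_msep {V : Type} {G : MixedGraph V} {i j : V} (h : G.adj i j) (C : Set V) :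
    ¬ G.msep {i} {j} C := by
  intro hms
  refine hms i rfl j rfl ⟨1, fun m => if m = 0 then i else j, by simp, by simp, ?_, ?_⟩
  · intro m hm
    interval_cases m
    simpa using h
  · intro m hm0 hm1
    omega

lemma exists_missing {V : Type} {G' G : MixedGraph V} (hp : G'.ProperSubgraph G) :
    ∃ i j, i ≠ j ∧ G.adj i j ∧ ¬ G'.adj i j := by
  obtain ⟨hs, hne⟩ := hp
  rcases hne with hne | hne | hne
  · have hex : ∃ i j, G.dir i j ∧ ¬ G'.dir i j := by
      by_contra hc
      push_neg at hc
      exact hne (funext fun i => funext fun j =>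
        propext ⟨fun h => hs.1 _ _ h, fun h => hc i j h⟩)
    obtain ⟨i, j, hij, hij'⟩ := hex
    refine ⟨i, j, ?_, Or.inl hij, ?_⟩
    · rintro rfl; exact G.dir_irrefl _ hij
    · rintro (h | h | h | h)
      · exact hij' h
      · exact G.not_dir_dir _ _ hij (hs.1 _ _ h)
      · exact G.not_dir_undir _ _ hij (hs.2.1 _ _ h)
      · exact G.not_dir_bidir _ _ hij (hs.2.2 _ _ h)
  · have hex : ∃ i j, G.undir i j ∧ ¬ G'.undir i j := by
      by_contra hc
      push_neg at hc
      exact hne (funext fun i => funext fun j =>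
        propext ⟨fun h => hs.2.1 _ _ h, fun h => hc i j h⟩)
    obtain ⟨i, j, hij, hij'⟩ := hex
    refine ⟨i, j, ?_, Or.inr (Or.inr (Or.inl hij)), ?_⟩
    · rintro rfl; exact G.undir_irrefl _ hij
    · rintro (h | h | h | h)
      · exact G.not_dir_undir _ _ (hs.1 _ _ h) hij
      · exact G.not_dir_undir _ _ (hs.1 _ _ h) (G.undir_symm _ _ hij)
      · exact hij' h
      · exact G.not_undir_bidir _ _ hij (hs.2.2 _ _ h)
  · have hex : ∃ i j, G.bidir i j ∧ ¬ G'.bidir i j := by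
      by_contra hc
      push_neg at hc
      exact hne (funext fun i => funext fun j =>
        propext ⟨fun h => hs.2.2 _ _ h, fun h => hc i j h⟩)
    obtain ⟨i, j, hij, hij'⟩ := hex
    refine ⟨i, j, ?_, Or.inr (Or.inr (Or.inr hij)), ?_⟩
    · rintro rfl; exact G.bidir_irrefl _ hij
    · rintro (h | h | h | h)
      · exact G.not_dir_bidir _ _ (hs.1 _ _ h) hij
      · exact G.not_dir_bidir _ _ (hs.1 _ _ h) (G.bidir_symm _ _ hij)
      · exact G.not_undir_bidir _ _ (hs.2.1 _ _ h) hij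
      · exact hij' h

end MixedGraph

/-- Pearl-minimal implies causally minimal for maximal ancestral graphs
(Proposition 10, implication 3 ⇒ 4). -/
theorem pearlMinimal_implies_causallyMinimal_MAG {V : Type} [Fintype V]
    (P : Set (Set V × Set V × Set V)) (hP : ∀ t ∈ P, DisjTriple t)
    (G : MixedGraph V) (hG : G.IsMAG)
    (h : PearlMinimalMAG P G) : CausallyMinimalMAG P G := by
  refine ⟨h.1, ?_⟩
  rintro ⟨G', hMAG, hProper, hMarkov⟩
  obtain ⟨i, j, hij, hadjG, hnadjG'⟩ := MixedGraph.exists_missing hProper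
  obtain ⟨C, hiC, hjC, hsep⟩ := hMAG.2 i j hij hnadjG'
  apply h.2
  refine ⟨G', hMAG, ?_, hMarkov⟩
  rw [Set.ssubset_def]
  constructor
  · rintro ⟨A, B, C'⟩ ⟨hd, hm⟩
    exact ⟨hd, MixedGraph.msep_mono hProper.1 hm⟩
  · intro hsub
    have ht : (({i}, {j}, C) : Set V × Set V × Set V) ∈ MixedGraph.J G' := by
      refine ⟨⟨?_, ?_, ?_⟩, hsep⟩
      · exact Set.disjoint_singleton.mpr hij
      · exact Set.disjoint_singleton_left.mpr hiC
      · exact Set.disjoint_singleton_left.mpr hjC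
    exact MixedGraph.adj_not_msep hadjG C (hsub ht).2
end
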